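/- Let m ≥ 1 be a natural number, let w be a real with 1 < w < 2^m, and let b be a natural number with b ≥ max{2m, 4}. Set s = ⌈log₂ b⌉. Let p be the unique positive integer with 2^{p−1} ≤ w < 2^p, set x̂₀ = 2^{−p}, and x̂_i = trunc_b(−w·x̂_{i−1}² + 2·x̂_{i−1}) for i = 1,…,s. Then x̂_s > 0, and letting q be the unique integer with 2^{−q} ≤ x̂_s < 2^{1−q}, setting ŷ₀ = 2^{⌊(q−1)/2⌋} and ŷ_j = trunc_b((1/2)(3·ŷ_{j−1} − x̂_s·ŷ_{j−1}³)) for j = 1,…,s, one has |ŷ_s − √w| ≤ (3/4)^{b−2m}·(2 + b + log₂ b). -/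
import Mathlib

/-- Truncation of a real number to `b` bits after the binary point:
`trunc b y = ⌊2^b * y⌋ / 2^b`. -/
noncomputable def trunc (b : ℕ) (y : ℝ) : ℝ := (⌊(2:ℝ)^b * y⌋ : ℝ) / 2^b

private lemma trunc_le_self (b : ℕ) (y : ℝ) : trunc b y ≤ y := by
  have h2 : (0:ℝ) < 2^b := by positivity
  rw [trunc, div_le_iff₀ h2]
  calc ((⌊(2:ℝ)^b * y⌋ : ℤ) : ℝ) ≤ 2^b * y := Int.floor_le _
    _ = y * 2^b := by ring

private lemma self_lt_trunc (b : ℕ) (y : ℝ) : y - ((2:ℝ)^b)⁻¹ < trunc b y := by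
  have h2 : (0:ℝ) < 2^b := by positivity
  rw [trunc, lt_div_iff₀ h2]
  have h := Int.sub_one_lt_floor ((2:ℝ)^b * y)
  have he : (y - ((2:ℝ)^b)⁻¹) * 2^b = 2^b * y - 1 := by field_simp
  rw [he]; exact h

private lemma le_of_sq_le_sq'' {x y : ℝ} (hx : 0 ≤ x) (hy : 0 ≤ y) (h : x^2 ≤ y^2) : x ≤ y := by
  nlinarith

private lemma three_mul_le_two_pow {n : ℕ} (h : 4 ≤ n) : 3*n ≤ 2^n := by
  induction n, h using Nat.le_induction with
  | base => norm_num
  | succ n hn ih =>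
    have h16 : 16 ≤ 2^n := by
      calc (16:ℕ) = 2^4 := by norm_num
        _ ≤ 2^n := Nat.pow_le_pow_right (by norm_num) hn
    have hp : 2^(n+1) = 2 * 2^n := by ring
    omega

private lemma pow2_div_le {u v d : ℕ} (h : u + d ≤ v) :
    (2:ℝ)^u * ((2:ℝ)^v)⁻¹ ≤ ((2:ℝ)^d)⁻¹ := by
  have h1 : (0:ℝ) < 2^v := by positivity
  have h2 : (0:ℝ) < 2^d := by positivity
  rw [inv_eq_one_div ((2:ℝ)^v), inv_eq_one_div ((2:ℝ)^d), mul_one_div,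
    div_le_div_iff₀ h1 h2, one_mul, ← pow_add]
  exact pow_le_pow_right₀ one_le_two h

/- small arithmetic lemmas (kept standalone so `nlinarith` works in tiny contexts) -/

private lemma L1 {e d c : ℝ} (h0 : 0 ≤ e) (h1 : e ≤ 1/2) (hd0 : 0 ≤ d) (hd1 : d ≤ c)
    (hc : c ≤ 1/4) : 0 ≤ e^2 + d ∧ e^2 + d ≤ 1/2 := by
  constructor <;> nlinarith

private lemma L2 {e d c : ℝ} (h1 : e ≤ 1/2) (h0 : 0 ≤ e) (hd1 : d ≤ c) :
    e^2 + d ≤ 1/4 + c := by nlinarith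

private lemma L3 {e d c : ℝ} (h0 : 0 ≤ e) (h1 : e ≤ 1/4 + c) (hd0 : 0 ≤ d) (hd1 : d ≤ c)
    (hc0 : 0 < c) (hc : c ≤ 1/8) : e^2 + d ≤ 1/16 + 2*c := by nlinarith

private lemma L4 {e d c G : ℝ} (h0 : 0 ≤ e) (h1 : e ≤ G + 2*c) (hG0 : 0 ≤ G)
    (hG1 : G ≤ 1/16) (hc0 : 0 < c) (hc : c ≤ 1/8) (hd0 : 0 ≤ d) (hd1 : d ≤ c) :
    e^2 + d ≤ G^2 + 2*c := by nlinarith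

private lemma L5 {A z : ℝ} (h0 : 0 ≤ A) (h1 : A ≤ 1/2) (hz0 : 0 ≤ z) (hz1 : z ≤ 1/16) :
    0 ≤ A^2*(3-A)/2 + z ∧ A^2*(3-A)/2 + z ≤ 1/2 := by
  constructor <;> nlinarith [mul_nonneg (mul_nonneg h0 h0) h0]

private lemma L6 {A z r' : ℝ} (h0 : 0 ≤ A) (hz : z ≤ r') :
    (3/2)*(A^2*(3-A)/2 + z) ≤ ((3/2)*A)^2 + (3/2)*r' := by
  nlinarith [mul_nonneg (mul_nonneg h0 h0) h0]

private lemma L7 {X X' G M e' : ℝ} (hX : 0 ≤ X) (hXG : X ≤ G + M) (hG0 : 0 ≤ G)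
    (hG1 : G ≤ 3/4) (hM0 : 0 ≤ M) (hM : M ≤ 1/2) (he' : 0 ≤ e')
    (hst : X' ≤ X^2 + e') : X' ≤ G^2 + (2*M + e') := by
  nlinarith

private lemma L8a {v : ℝ} (h0 : 0 ≤ v) (h1 : v^2 < 1) : 0 ≤ 1 - v := by nlinarith

private lemma L8b {v : ℝ} (h0 : 0 ≤ v) (h1 : 1/4 ≤ v^2) : 1 - v ≤ 1/2 := by nlinarith

private lemma L9 {u : ℝ} (h1 : 1/2 ≤ u) (h2 : u ≤ 1) : 1 ≤ u*(1+(1-u))^2 := by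
  nlinarith [sq_nonneg (1-u), sq_nonneg (u - 1/2), mul_nonneg (sub_nonneg.2 h2) (sub_nonneg.2 h1)]

set_option maxHeartbeats 1600000 in
/-- Error analysis of Algorithm SQRT: two stages of Newton's iteration in fixed-precision
arithmetic.  Stage 1 approximates `1/w`; Stage 2 applies Newton's method to
`f(y) = 1/y² − x̂ₛ` and yields an approximation of `√w`. -/
theorem stmt1 (m : ℕ) (hm : 1 ≤ m) (w : ℝ) (hw1 : 1 < w) (hw2 : w < 2^m)
    (b : ℕ) (hb : max (2*m) 4 ≤ b)
    (p : ℕ) (hp : 1 ≤ p) (hp1 : (2:ℝ)^(p-1) ≤ w) (hp2 : w < 2^p)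
    (xhat : ℕ → ℝ) (hx0 : xhat 0 = (2:ℝ)^(-(p:ℤ)))
    (hxrec : ∀ i : ℕ, xhat (i+1) = trunc b (-w * (xhat i)^2 + 2 * xhat i)) :
    0 < xhat ⌈Real.logb 2 b⌉₊ ∧
    ∀ q : ℤ, (2:ℝ)^(-q) ≤ xhat ⌈Real.logb 2 b⌉₊ → xhat ⌈Real.logb 2 b⌉₊ < (2:ℝ)^(1-q) →
      ∀ yhat : ℕ → ℝ, yhat 0 = (2:ℝ)^(⌊((q:ℝ)-1)/2⌋) →
        (∀ j : ℕ, yhat (j+1) =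
          trunc b ((1/2) * (3 * yhat j - xhat ⌈Real.logb 2 b⌉₊ * (yhat j)^3))) →
        |yhat ⌈Real.logb 2 b⌉₊ - Real.sqrt w| ≤
          (3/4 : ℝ)^(b - 2*m) * (2 + (b:ℝ) + Real.logb 2 b) := by
  have hb2m : 2*m ≤ b := le_trans (le_max_left _ _) hb
  have hb4 : 4 ≤ b := le_trans (le_max_right _ _) hb
  have hw0 : (0:ℝ) < w := lt_trans one_pos hw1
  set s := ⌈Real.logb 2 (b:ℝ)⌉₊ with hs_def
  clear_value s
  set r : ℝ := ((2:ℝ)^b)⁻¹ with hr_def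
  have hr0 : 0 < r := by rw [hr_def]; positivity
  have hr16 : r ≤ 1/16 := by
    rw [hr_def, show (1:ℝ)/16 = ((16:ℝ))⁻¹ by norm_num]
    apply inv_anti₀ (by norm_num)
    calc (16:ℝ) = 2^4 := by norm_num
      _ ≤ 2^b := pow_le_pow_right₀ one_le_two hb4
  -- Stage 1 truncation errors
  have hδ : ∀ i, 0 ≤ (-w*(xhat i)^2 + 2*xhat i) - xhat (i+1) ∧
      (-w*(xhat i)^2 + 2*xhat i) - xhat (i+1) ≤ r := by
    intro i
    rw [hxrec i, hr_def]
    constructor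
    · linarith only [trunc_le_self b (-w*(xhat i)^2 + 2*xhat i)]
    · linarith only [self_lt_trunc b (-w*(xhat i)^2 + 2*xhat i)]
  have herec : ∀ i, 1 - w * xhat (i+1)
      = (1 - w * xhat i)^2 + w * ((-w*(xhat i)^2 + 2*xhat i) - xhat (i+1)) := by
    intro i; ring
  set c : ℝ := (2:ℝ)^m * r with hc_def
  have hc0 : 0 < c := by rw [hc_def]; positivity
  have hwd : ∀ i, 0 ≤ w * ((-w*(xhat i)^2 + 2*xhat i) - xhat (i+1)) ∧
      w * ((-w*(xhat i)^2 + 2*xhat i) - xhat (i+1)) ≤ c := by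
    intro i
    obtain ⟨h1, h2⟩ := hδ i
    refine ⟨mul_nonneg hw0.le h1, ?_⟩
    rw [hc_def]
    exact mul_le_mul hw2.le h2 h1 (by positivity)
  have hcq : c ≤ 1/4 := by
    have h := pow2_div_le (u := m) (v := b) (d := 2) (by omega)
    rw [hc_def, hr_def]
    calc (2:ℝ)^m * ((2:ℝ)^b)⁻¹ ≤ ((2:ℝ)^2)⁻¹ := h
      _ = 1/4 := by norm_num
  -- bounds on e 0
  have h2p : (0:ℝ) < 2^p := by positivity
  have hzp : (2:ℝ)^(-(p:ℤ)) = ((2:ℝ)^p)⁻¹ := by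
    rw [zpow_neg, zpow_natCast]
  have hps : (2:ℝ)^(p-1) * 2 = (2:ℝ)^p := by
    rw [← pow_succ]; congr 1; omega
  have he0u : w * (2:ℝ)^(-(p:ℤ)) < 1 := by
    rw [hzp]
    have h := mul_lt_mul_of_pos_right hp2 (inv_pos.2 h2p)
    rwa [mul_inv_cancel₀ (ne_of_gt h2p)] at h
  have he0l : 1/2 ≤ w * (2:ℝ)^(-(p:ℤ)) := by
    rw [hzp]
    have h1 := mul_le_mul_of_nonneg_right hp1 (inv_pos.2 h2p).le
    have h2 : (2:ℝ)^(p-1) * ((2:ℝ)^p)⁻¹ = 1/2 := by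
      rw [← hps]; field_simp
    linarith only [h1, h2]
  -- invariant for stage 1
  have he : ∀ i, 0 ≤ 1 - w * xhat i ∧ 1 - w * xhat i ≤ 1/2 := by
    intro i
    induction i with
    | zero => rw [hx0]; exact ⟨by linarith only [he0u], by linarith only [he0l]⟩
    | succ i ih =>
      rw [herec i]
      exact L1 ih.1 ih.2 (hwd i).1 (hwd i).2 hcq
  have hxs_pos : 0 < xhat s := by
    by_contra hcon
    push_neg at hcon
    have h1 := mul_nonneg hw0.le (neg_nonneg.2 hcon)
    have h2 := (he s).2
    nlinarith [h1, h2]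
  refine ⟨hxs_pos, ?_⟩
  intro q hq1 hq2 yhat hy0 hyrec
  -- facts about s
  have hb0R : (0:ℝ) < (b:ℝ) := by positivity
  have hlogb4 : (2:ℝ) ≤ Real.logb 2 (b:ℝ) := by
    have h4 : Real.logb 2 (4:ℝ) = 2 := by
      rw [show (4:ℝ) = 2^(2:ℕ) by norm_num, Real.logb_pow,
        Real.logb_self_eq_one (by norm_num)]
      norm_num
    have h5 : Real.logb 2 (4:ℝ) ≤ Real.logb 2 (b:ℝ) :=
      Real.logb_le_logb_of_le (by norm_num) (by norm_num) (by exact_mod_cast hb4)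
    linarith only [h4, h5]
  have hs2 : 2 ≤ s := by
    have h1 : ⌈(2:ℝ)⌉₊ ≤ ⌈Real.logb 2 (b:ℝ)⌉₊ := Nat.ceil_le_ceil hlogb4
    rw [← hs_def] at h1
    simpa using h1
  have hble : (b:ℝ) ≤ (2:ℝ)^s := by
    have h1 : Real.logb 2 (b:ℝ) ≤ (s:ℝ) := by rw [hs_def]; exact Nat.le_ceil _
    have h2 := (Real.logb_le_iff_le_rpow (by norm_num) hb0R).1 h1
    rwa [Real.rpow_natCast] at h2
  have hble' : b ≤ 2^s := by exact_mod_cast hble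
  have h2sb : (2:ℝ)^s ≤ 2*(b:ℝ) := by
    have h0 : s - 1 < ⌈Real.logb 2 (b:ℝ)⌉₊ := by rw [← hs_def]; omega
    have h1 : ((s-1:ℕ):ℝ) < Real.logb 2 (b:ℝ) := Nat.lt_ceil.1 h0
    have h2 := (Real.lt_logb_iff_rpow_lt (by norm_num) hb0R).1 h1
    rw [Real.rpow_natCast] at h2
    have h3 : (2:ℝ)^s = 2^(s-1) * 2 := by rw [← pow_succ]; congr 1; omega
    linarith only [h2, h3]
  -- stage 2 setup
  set t : ℝ := xhat s with ht_def
  have ht0 : 0 < t := hxs_pos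
  have hwt0 : 1/2 ≤ w * t := by have h := (he s).2; rw [← ht_def] at h; linarith only [h]
  have hwt1 : w * t ≤ 1 := by have h := (he s).1; rw [← ht_def] at h; linarith only [h]
  have ht1 : t < 1 := by nlinarith [mul_pos ht0 (sub_pos.2 hw1), hwt1]
  have h2m1 : (0:ℝ) < 2^(m+1) := by positivity
  have htlow : 1 < t * (2:ℝ)^(m+1) := by
    rw [pow_succ]
    nlinarith [mul_pos ht0 (sub_pos.2 hw2), hwt0]
  set st := Real.sqrt t with hst_def
  have hst2 : st^2 = t := Real.sq_sqrt ht0.le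
  have hst0 : 0 < st := Real.sqrt_pos.2 ht0
  have hst1 : st ≤ 1 := Real.sqrt_le_one.2 ht1.le
  set S := Real.sqrt ((2:ℝ)^(m+1)) with hS_def
  have hS2 : S^2 = 2^(m+1) := Real.sq_sqrt (by positivity)
  have hS0 : 0 ≤ S := Real.sqrt_nonneg _
  have hinvst : 1/st ≤ S := by
    apply le_of_sq_le_sq'' (by positivity) hS0
    rw [div_pow, one_pow, hst2, hS2, div_le_iff₀ ht0, mul_comm]
    linarith only [htlow]
  have hsqrtw_le : Real.sqrt w ≤ S := by
    apply le_of_sq_le_sq'' (Real.sqrt_nonneg _) hS0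
    rw [Real.sq_sqrt hw0.le, hS2, pow_succ]
    linarith only [hw2, pow_pos (show (0:ℝ) < 2 by norm_num) m]
  have hsw_le_inv : Real.sqrt w ≤ 1/st := by
    apply le_of_sq_le_sq'' (Real.sqrt_nonneg _) (by positivity)
    rw [Real.sq_sqrt hw0.le, div_pow, one_pow, hst2, le_div_iff₀ ht0]
    linarith only [hwt1]
  have hes0 : 0 ≤ 1 - w*t := by
    have h := (he s).1; rw [← ht_def] at h; linarith only [h]
  have hes12 : 1 - w*t ≤ 1/2 := by
    have h := (he s).2; rw [← ht_def] at h; linarith only [h]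
  have hinv_le : 1/st ≤ Real.sqrt w * (1 + (1 - w*t)) := by
    apply le_of_sq_le_sq'' (by positivity)
      (mul_nonneg (Real.sqrt_nonneg _) (by linarith only [hes0]))
    rw [mul_pow, Real.sq_sqrt hw0.le, div_pow, one_pow, hst2, div_le_iff₀ ht0]
    have key := L9 hwt0 hwt1
    calc (1:ℝ) ≤ (w*t)*(1+(1-w*t))^2 := key
      _ = w * (1 + (1 - w*t))^2 * t := by ring
  -- stage 2 truncation errors
  have hρ : ∀ j, 0 ≤ (1/2)*(3*yhat j - t*(yhat j)^3) - yhat (j+1) ∧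
      (1/2)*(3*yhat j - t*(yhat j)^3) - yhat (j+1) ≤ r := by
    intro j
    rw [hyrec j, hr_def]
    constructor
    · linarith only [trunc_le_self b ((1/2)*(3*yhat j - t*(yhat j)^3))]
    · linarith only [self_lt_trunc b ((1/2)*(3*yhat j - t*(yhat j)^3))]
  have harec : ∀ j, 1 - yhat (j+1) * st
      = ((1 - yhat j*st)^2 * (3 - (1 - yhat j*st)))/2
        + ((1/2)*(3*yhat j - t*(yhat j)^3) - yhat (j+1)) * st := by
    intro j; rw [← hst2]; ring
  have hρst : ∀ j, 0 ≤ ((1/2)*(3*yhat j - t*(yhat j)^3) - yhat (j+1)) * st ∧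
      ((1/2)*(3*yhat j - t*(yhat j)^3) - yhat (j+1)) * st ≤ r := by
    intro j
    obtain ⟨h1, h2⟩ := hρ j
    refine ⟨mul_nonneg h1 hst0.le, ?_⟩
    calc ((1/2)*(3*yhat j - t*(yhat j)^3) - yhat (j+1)) * st
        ≤ r * 1 := mul_le_mul h2 hst1 hst0.le hr0.le
      _ = r := mul_one r
  -- initial guess bound
  have hk1 : ((⌊((q:ℝ)-1)/2⌋ : ℤ):ℝ) ≤ ((q:ℝ)-1)/2 := Int.floor_le _
  have hk2 : ((q:ℝ)-1)/2 < (⌊((q:ℝ)-1)/2⌋ : ℤ) + 1 := Int.lt_floor_add_one _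
  set k : ℤ := ⌊((q:ℝ)-1)/2⌋ with hk_def
  clear_value k
  have hqk1 : 2*k + 1 ≤ q := by
    have h : (2*(k:ℝ) + 1) ≤ (q:ℝ) := by linarith only [hk1]
    exact_mod_cast h
  have hqk2 : q ≤ 2*k + 2 := by
    have h1 : (q:ℝ) < 2*(k:ℝ) + 3 := by linarith only [hk2]
    have h2 : q < 2*k + 3 := by exact_mod_cast h1
    omega
  have hv0sq : (yhat 0 * st)^2 = (2:ℝ)^(2*k) * t := by
    rw [hy0, mul_pow, hst2]
    congr 1
    rw [← zpow_natCast ((2:ℝ)^k) 2, ← zpow_mul, mul_comm]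
    norm_num
  have hlb : (2:ℝ)^(-2 : ℤ) ≤ (2:ℝ)^(2*k) * t := by
    calc (2:ℝ)^(-2:ℤ) ≤ (2:ℝ)^(2*k - q) := zpow_le_zpow_right₀ one_le_two (by omega)
      _ = (2:ℝ)^(2*k) * (2:ℝ)^(-q) := by
          rw [sub_eq_add_neg, zpow_add₀ (show (2:ℝ) ≠ 0 by norm_num)]
      _ ≤ (2:ℝ)^(2*k) * t := mul_le_mul_of_nonneg_left hq1 (by positivity)
  have hub : (2:ℝ)^(2*k) * t < 1 := by
    calc (2:ℝ)^(2*k) * t < (2:ℝ)^(2*k) * (2:ℝ)^(1-q) :=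
          mul_lt_mul_of_pos_left hq2 (by positivity)
      _ = (2:ℝ)^(2*k + (1 - q)) := by
          rw [← zpow_add₀ (show (2:ℝ) ≠ 0 by norm_num)]
      _ ≤ (2:ℝ)^(0:ℤ) := by
          apply zpow_le_zpow_right₀ one_le_two
          omega
      _ = 1 := by norm_num
  have hv00 : 0 ≤ yhat 0 * st := by
    rw [hy0]
    exact mul_nonneg (by positivity) hst0.le
  have hq14 : (2:ℝ)^(-2:ℤ) = 1/4 := by norm_num
  have hv0lt : (yhat 0 * st)^2 < 1 := by rw [hv0sq]; exact hub
  have hv0ge : 1/4 ≤ (yhat 0 * st)^2 := by rw [hv0sq, ← hq14]; exact hlb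
  have ha0l : 0 ≤ 1 - yhat 0 * st := L8a hv00 hv0lt
  have ha0u : 1 - yhat 0 * st ≤ 1/2 := L8b hv00 hv0ge
  -- invariant for stage 2
  have hay : ∀ j, 0 ≤ 1 - yhat j * st ∧ 1 - yhat j*st ≤ 1/2 := by
    intro j
    induction j with
    | zero => exact ⟨ha0l, ha0u⟩
    | succ j ih =>
      rw [harec j]
      exact L5 ih.1 ih.2 (hρst j).1 (le_trans (hρst j).2 hr16)
  -- case split on b
  rcases Nat.lt_or_ge b 5 with hb5 | hb5
  · -- b = 4 : trivial bound
    have hb4' : b = 4 := by omega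
    have hyub : yhat s ≤ 1/st := by
      rw [le_div_iff₀ hst0]; linarith only [(hay s).1]
    have hy0' : 0 ≤ yhat s := by
      by_contra hcon
      push_neg at hcon
      have h1 : yhat s * st < 0 := mul_neg_of_neg_of_pos hcon hst0
      linarith only [h1, (hay s).2]
    have hS3 : S ≤ 3 := by
      apply le_of_sq_le_sq'' hS0 (by norm_num)
      rw [hS2]
      calc (2:ℝ)^(m+1) ≤ 2^3 := pow_le_pow_right₀ one_le_two (by omega)
        _ ≤ 3^2 := by norm_num
    have habs : |yhat s - Real.sqrt w| ≤ 3 := by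
      rw [abs_le]
      constructor
      · linarith only [hy0', hsqrtw_le, hS3, Real.sqrt_nonneg w]
      · linarith only [hyub, hinvst, hS3, Real.sqrt_nonneg w]
    have hlog : Real.logb 2 ((4:ℕ):ℝ) = 2 := by
      push_cast
      rw [show (4:ℝ) = 2^(2:ℕ) by norm_num, Real.logb_pow,
        Real.logb_self_eq_one (by norm_num)]
      norm_num
    subst hb4'
    have hm2 : m ≤ 2 := by omega
    interval_cases m
    · calc |yhat s - Real.sqrt w| ≤ 3 := habs
        _ ≤ (3/4:ℝ)^(4 - 2*1) * (2 + ((4:ℕ):ℝ) + 2) := by norm_num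
        _ = (3/4:ℝ)^(4 - 2*1) * (2 + ((4:ℕ):ℝ) + Real.logb 2 ((4:ℕ):ℝ)) := by rw [hlog]
    · calc |yhat s - Real.sqrt w| ≤ 3 := habs
        _ ≤ (3/4:ℝ)^(4 - 2*2) * (2 + ((4:ℕ):ℝ) + 2) := by norm_num
        _ = (3/4:ℝ)^(4 - 2*2) * (2 + ((4:ℕ):ℝ) + Real.logb 2 ((4:ℕ):ℝ)) := by rw [hlog]
  · -- main case b ≥ 5
    have hc18 : c ≤ 1/8 := by
      have h := pow2_div_le (u := m) (v := b) (d := 3) (by omega)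
      rw [hc_def, hr_def]
      calc (2:ℝ)^m * ((2:ℝ)^b)⁻¹ ≤ ((2:ℝ)^3)⁻¹ := h
        _ = 1/8 := by norm_num
    -- quantitative stage-1 bound
    have he1 : 1 - w*xhat 1 ≤ 1/4 + c := by
      rw [herec 0]
      exact L2 (he 0).2 (he 0).1 (hwd 0).2
    have he2 : 1 - w*xhat 2 ≤ (1/2:ℝ)^(2^2) + 2*c := by
      rw [herec 1, show ((1/2:ℝ)^(2^2) : ℝ) = 1/16 by norm_num]
      exact L3 (he 1).1 he1 (hwd 1).1 (hwd 1).2 hc0 hc18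
    have hE : ∀ i, 2 ≤ i → 1 - w*xhat i ≤ (1/2:ℝ)^(2^i) + 2*c := by
      intro i hi
      induction i, hi using Nat.le_induction with
      | base => exact he2
      | succ i hi ih =>
        have hG : (1/2:ℝ)^(2^i) ≤ 1/16 := by
          calc (1/2:ℝ)^(2^i) ≤ (1/2:ℝ)^(2^2) :=
                pow_le_pow_of_le_one (by norm_num) (by norm_num)
                  (Nat.pow_le_pow_right (by norm_num) hi)
            _ = 1/16 := by norm_num
        have hG0 : (0:ℝ) ≤ (1/2:ℝ)^(2^i) := by positivity
        have hGsq : ((1/2:ℝ)^(2^i))^2 = (1/2:ℝ)^(2^(i+1)) := by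
          rw [← pow_mul, pow_succ]
        rw [herec i, ← hGsq]
        exact L4 (he i).1 ih hG0 hG hc0 hc18 (hwd i).1 (hwd i).2
    have hes : 1 - w*t ≤ 3*c := by
      have h1 := hE s hs2
      rw [← ht_def] at h1
      have h2 : (1/2:ℝ)^(2^s) ≤ (1/2:ℝ)^b :=
        pow_le_pow_of_le_one (by norm_num) (by norm_num) hble'
      have h3 : (1/2:ℝ)^b = r := by
        rw [hr_def, one_div, inv_pow]
      have h4 : r ≤ c := by
        rw [hc_def]
        nth_rewrite 1 [← one_mul r]
        exact mul_le_mul_of_nonneg_right (one_le_pow₀ one_le_two) hr0.le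
      linarith only [h1, h2, h3, h4]
    -- quantitative stage-2 bound
    set ε : ℝ := (3/2)*r with hε_def
    have hε0 : (0:ℝ) ≤ ε := by rw [hε_def]; linarith only [hr0]
    have hMb : (3:ℝ)*(b:ℝ)*r ≤ 1 := by
      have h1 : 3*b ≤ 2^b := three_mul_le_two_pow (by omega)
      have h2 : ((3*b:ℕ):ℝ) ≤ ((2^b:ℕ):ℝ) := by exact_mod_cast h1
      push_cast at h2
      calc (3:ℝ)*(b:ℝ)*r ≤ (2:ℝ)^b * r :=
            mul_le_mul_of_nonneg_right (by linarith only [h2]) hr0.le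
        _ = 1 := by rw [hr_def]; field_simp
    have hstep : ∀ j, (3/2)*(1 - yhat (j+1)*st) ≤ ((3/2)*(1 - yhat j*st))^2 + ε := by
      intro j
      rw [harec j, hε_def]
      exact L6 (hay j).1 (hρst j).2
    have hA : ∀ j, j ≤ s → (3/2)*(1 - yhat j*st) ≤ (3/4:ℝ)^(2^j) + (((2^j:ℕ):ℝ) - 1)*ε := by
      intro j
      induction j with
      | zero =>
        intro _
        have h := ha0u
        norm_num
        linarith only [h]
      | succ j ih =>
        intro hj1
        have IH := ih (by omega)
        have h2j1 : (1:ℝ) ≤ ((2^j:ℕ):ℝ) := by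
          exact_mod_cast Nat.one_le_two_pow
        have h2jb : ((2^j:ℕ):ℝ) ≤ (b:ℝ) := by
          have h1 : (2:ℕ)^j ≤ 2^(s-1) := Nat.pow_le_pow_right (by norm_num) (by omega)
          have h1' : ((2:ℝ))^j ≤ (2:ℝ)^(s-1) := by exact_mod_cast h1
          have h2 : (2:ℝ)^(s-1) * 2 = (2:ℝ)^s := by rw [← pow_succ]; congr 1; omega
          push_cast
          linarith only [h1', h2, h2sb]
        have hM : (((2^j:ℕ):ℝ) - 1)*ε ≤ 1/2 := by
          have h1 : (((2^j:ℕ):ℝ) - 1)*ε ≤ (b:ℝ)*ε :=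
            mul_le_mul_of_nonneg_right (by linarith only [h2jb]) hε0
          have h2 : (b:ℝ)*ε = (1/2)*((3:ℝ)*(b:ℝ)*r) := by rw [hε_def]; ring
          linarith only [h1, h2, hMb]
        have hM0 : 0 ≤ (((2^j:ℕ):ℝ) - 1)*ε := mul_nonneg (by linarith only [h2j1]) hε0
        have hG0 : (0:ℝ) ≤ (3/4:ℝ)^(2^j) := by positivity
        have hG1 : (3/4:ℝ)^(2^j) ≤ 3/4 := by
          calc (3/4:ℝ)^(2^j) ≤ (3/4:ℝ)^(2^0) :=
                pow_le_pow_of_le_one (by norm_num) (by norm_num)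
                  (Nat.pow_le_pow_right (by norm_num) (Nat.zero_le j))
            _ = 3/4 := by norm_num
        have hGsq : ((3/4:ℝ)^(2^j))^2 = (3/4:ℝ)^(2^(j+1)) := by
          rw [← pow_mul, pow_succ]
        have h30 : 0 ≤ (3/2)*(1 - yhat j*st) := by linarith only [(hay j).1]
        have h7 := L7 h30 IH hG0 hG1 hM0 hM hε0 (hstep j)
        have hcast : ((2^(j+1):ℕ):ℝ) = 2*((2^j:ℕ):ℝ) := by push_cast [pow_succ]; ring
        rw [hcast, ← hGsq]
        linarith only [h7]
    have hAs := hA s (le_refl s)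
    have hq1' : (3/4:ℝ)^(2^s) ≤ (3/4:ℝ)^b :=
      pow_le_pow_of_le_one (by norm_num) (by norm_num) hble'
    have h2s2b : ((2^s:ℕ):ℝ) ≤ 2*(b:ℝ) := by
      push_cast
      exact h2sb
    have has : 1 - yhat s * st ≤ (2/3)*(3/4:ℝ)^b + 2*(b:ℝ)*r := by
      have h1 : (((2^s:ℕ):ℝ) - 1)*ε ≤ 2*(b:ℝ)*ε :=
        mul_le_mul_of_nonneg_right (by linarith only [h2s2b]) hε0
      have h2 : 2*(b:ℝ)*ε = 3*(b:ℝ)*r := by rw [hε_def]; ring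
      linarith only [hAs, hq1', h1, h2]
    -- budget inequalities
    have hbd : 2*m + (b - 2*m) = b := by omega
    have hsplit : (3/4:ℝ)^b = (3/4:ℝ)^(2*m) * (3/4:ℝ)^(b-2*m) := by
      rw [← pow_add, hbd]
    have hK0 : (0:ℝ) ≤ (3/4:ℝ)^(b-2*m) := by positivity
    have hr2 : r^2 = ((2:ℝ)^(2*b))⁻¹ := by
      have hh : ((2:ℝ)^b)^2 = (2:ℝ)^(2*b) := by rw [← pow_mul, mul_comm]
      rw [hr_def, inv_pow, hh]
    have h12d : ((1/2:ℝ))^(b-2*m) = ((2:ℝ)^(b-2*m))⁻¹ := by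
      rw [one_div, inv_pow]
    have hKsq : ((1/2:ℝ))^(b-2*m) ≤ ((3/4:ℝ)^(b-2*m))^2 := by
      have h1 : ((3/4:ℝ)^(b-2*m))^2 = ((9/16:ℝ))^(b-2*m) := by
        rw [← pow_mul, mul_comm, pow_mul]; norm_num
      rw [h1]
      exact pow_le_pow_left₀ (by norm_num) (by norm_num) _
    have hC1 : S * ((2/3)*(3/4:ℝ)^(2*m)) ≤ 1 := by
      apply le_of_sq_le_sq'' (mul_nonneg hS0 (by positivity)) (by norm_num)
      have hexp : (((3:ℝ)/4)^(2*m))^2 = ((3/4:ℝ)^4)^m := by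
        rw [← pow_mul, ← pow_mul]; congr 1; ring
      have hmm : (2:ℝ)^m * ((3/4:ℝ)^4)^m = ((2:ℝ)*(3/4)^4)^m := (mul_pow _ _ _).symm
      have hps' : (2:ℝ)^(m+1) = 2*2^m := by rw [pow_succ]; ring
      have hle1 : ((2:ℝ)*(3/4)^4)^m ≤ 1 := pow_le_one₀ (by norm_num) (by norm_num)
      calc (S * ((2/3)*(3/4:ℝ)^(2*m)))^2
          = S^2 * ((2/3)^2 * (((3:ℝ)/4)^(2*m))^2) := by ring
        _ = (8/9) * ((2:ℝ)*(3/4)^4)^m := by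
            rw [hS2, hexp, hps', ← hmm]; ring
        _ ≤ (8/9) * 1 := mul_le_mul_of_nonneg_left hle1 (by norm_num)
        _ ≤ 1^2 := by norm_num
    have hC2 : S * (2*r) ≤ (3/4:ℝ)^(b-2*m) := by
      apply le_of_sq_le_sq'' (mul_nonneg hS0 (by linarith only [hr0])) hK0
      have h1 : (S * (2*r))^2 = (2:ℝ)^(m+3) * ((2:ℝ)^(2*b))⁻¹ := by
        have h4 : (2:ℝ)^(m+3) = (2:ℝ)^(m+1) * 4 := by
          rw [show m+3 = (m+1)+2 by omega, pow_add]; norm_num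
        rw [mul_pow, hS2, mul_pow, hr2, h4]; ring
      have h2 : (2:ℝ)^(m+3) * ((2:ℝ)^(2*b))⁻¹ ≤ ((2:ℝ)^(b-2*m))⁻¹ :=
        pow2_div_le (by omega)
      rw [h1]
      calc (2:ℝ)^(m+3) * ((2:ℝ)^(2*b))⁻¹ ≤ ((2:ℝ)^(b-2*m))⁻¹ := h2
        _ = ((1/2:ℝ))^(b-2*m) := h12d.symm
        _ ≤ ((3/4:ℝ)^(b-2*m))^2 := hKsq
    have hC3 : S * c ≤ (3/4:ℝ)^(b-2*m) := by
      apply le_of_sq_le_sq'' (mul_nonneg hS0 hc0.le) hK0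
      have h1 : (S * c)^2 = (2:ℝ)^(3*m+1) * ((2:ℝ)^(2*b))⁻¹ := by
        have e1 : (2:ℝ)^(m+1)*((2:ℝ)^m)^2 = (2:ℝ)^(3*m+1) := by
          rw [← pow_mul, ← pow_add]; congr 1; ring
        calc (S * c)^2 = ((2:ℝ)^(m+1)*((2:ℝ)^m)^2) * r^2 := by
              rw [hc_def, mul_pow, hS2, mul_pow]; ring
          _ = (2:ℝ)^(3*m+1) * ((2:ℝ)^(2*b))⁻¹ := by rw [e1, hr2]
      have h2 : (2:ℝ)^(3*m+1) * ((2:ℝ)^(2*b))⁻¹ ≤ ((2:ℝ)^(b-2*m))⁻¹ :=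
        pow2_div_le (by omega)
      rw [h1]
      calc (2:ℝ)^(3*m+1) * ((2:ℝ)^(2*b))⁻¹ ≤ ((2:ℝ)^(b-2*m))⁻¹ := h2
        _ = ((1/2:ℝ))^(b-2*m) := h12d.symm
        _ ≤ ((3/4:ℝ)^(b-2*m))^2 := hKsq
    -- final assembly
    have hyub : yhat s ≤ 1/st := by
      rw [le_div_iff₀ hst0]; linarith only [(hay s).1]
    have h1 : yhat s - Real.sqrt w ≤ S * (1 - w*t) := by
      have hsp : Real.sqrt w * (1 + (1 - w*t)) = Real.sqrt w + Real.sqrt w*(1-w*t) := by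
        ring
      have h2 : Real.sqrt w * (1 - w*t) ≤ S * (1 - w*t) :=
        mul_le_mul_of_nonneg_right hsqrtw_le hes0
      linarith only [hyub, hinv_le, hsp, h2]
    have h2 : Real.sqrt w - yhat s ≤ S * (1 - yhat s*st) := by
      have hqe : 1/st - yhat s = (1 - yhat s*st) * (1/st) := by
        field_simp
      have hq2' : (1 - yhat s*st) * (1/st) ≤ (1 - yhat s*st) * S :=
        mul_le_mul_of_nonneg_left hinvst (hay s).1
      have h3 : (1 - yhat s*st) * S = S * (1 - yhat s*st) := mul_comm _ _
      linarith only [hsw_le_inv, hqe, hq2', h3]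
    have hSe : S * (1 - w*t) ≤ 3 * ((3/4:ℝ)^(b-2*m)) := by
      have h3 : S * (1 - w*t) ≤ S * (3*c) := mul_le_mul_of_nonneg_left hes hS0
      have h4 : S * (3*c) = 3*(S*c) := by ring
      linarith only [h3, h4, hC3]
    have hSa : S * (1 - yhat s*st) ≤ (1 + (b:ℝ)) * ((3/4:ℝ)^(b-2*m)) := by
      have t1 : S*((2/3)*(3/4:ℝ)^b) ≤ (3/4:ℝ)^(b-2*m) := by
        rw [hsplit]
        calc S*((2/3)*((3/4:ℝ)^(2*m)*(3/4:ℝ)^(b-2*m)))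
            = (S*((2/3)*(3/4:ℝ)^(2*m)))*(3/4:ℝ)^(b-2*m) := by ring
          _ ≤ 1*(3/4:ℝ)^(b-2*m) := mul_le_mul_of_nonneg_right hC1 hK0
          _ = (3/4:ℝ)^(b-2*m) := one_mul _
      have t2 : (b:ℝ)*(S*(2*r)) ≤ (b:ℝ)*(3/4:ℝ)^(b-2*m) :=
        mul_le_mul_of_nonneg_left hC2 (by positivity)
      have t3 : S * (1 - yhat s*st) ≤ S * ((2/3)*(3/4:ℝ)^b + 2*(b:ℝ)*r) :=
        mul_le_mul_of_nonneg_left has hS0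
      have t4 : S * ((2/3)*(3/4:ℝ)^b + 2*(b:ℝ)*r)
          = S*((2/3)*(3/4:ℝ)^b) + (b:ℝ)*(S*(2*r)) := by ring
      linarith only [t1, t2, t3, t4]
    have hbK0 : (0:ℝ) ≤ (b:ℝ) * ((3/4:ℝ)^(b-2*m)) := by positivity
    have habs : |yhat s - Real.sqrt w| ≤ ((b:ℝ)+4) * ((3/4:ℝ)^(b-2*m)) := by
      have hSe0 : 0 ≤ S * (1 - w*t) := mul_nonneg hS0 hes0
      have hSa0 : 0 ≤ S * (1 - yhat s*st) := mul_nonneg hS0 (hay s).1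
      rw [abs_le]
      constructor
      · linarith only [h2, hSa, hSe0, hSe, hbK0, hK0]
      · linarith only [h1, hSe, hSa0, hSa, hbK0, hK0]
    have hfin : ((b:ℝ)+4) ≤ 2 + (b:ℝ) + Real.logb 2 (b:ℝ) := by
      linarith only [hlogb4]
    calc |yhat s - Real.sqrt w| ≤ ((b:ℝ)+4) * ((3/4:ℝ)^(b-2*m)) := habs
      _ ≤ (2 + (b:ℝ) + Real.logb 2 (b:ℝ)) * ((3/4:ℝ)^(b-2*m)) :=
          mul_le_mul_of_nonneg_right hfin hK0
      _ = (3/4:ℝ)^(b-2*m) * (2 + (b:ℝ) + Real.logb 2 (b:ℝ)) := mul_comm _ _
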